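/- For a hyperbolic triangle with side lengths r₁+r₂, r₂+r₃, r₃+r₁ (r_i > 0) and angle θ_i opposite the side r_j+r_k: as r_i → ∞ with r_j, r_k in a fixed compact subset of (0,∞), the angle θ_i tends to 0. -/

import Mathlib

/-!
Since `cosh (x+y) cosh (x+z) - sinh (x+y) sinh (x+z) = cosh (y-z)` and
`cosh (y+z) - cosh (y-z) = 2 sinh y sinh z`, the cosine of the angle is
`1 - 2 sinh y sinh z / (sinh (x+y) sinh (x+z))`. For `|y|, |z| ≤ B` the subtracted term is at
most `2 sinh² B / sinh² (x - B)`, which tends to `0` as `x → ∞`, so the angle is squeezed down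
to `arccos 1 = 0`.
-/

open Real

/-- The angle at the vertex of radius `x` in the hyperbolic triangle with side
lengths `x+y`, `x+z`, `y+z` (hyperbolic circle packing triangle). -/
noncomputable def hypPackAngle (x y z : ℝ) : ℝ :=
  Real.arccos ((Real.cosh (x + y) * Real.cosh (x + z) - Real.cosh (y + z)) /
    (Real.sinh (x + y) * Real.sinh (x + z)))

open Filter Topology

namespace Real

lemma cosh_add_mul_cosh_add_sub_cosh_add (x y z : ℝ) :
    cosh (x + y) * cosh (x + z) - cosh (y + z) =
      sinh (x + y) * sinh (x + z) - 2 * sinh y * sinh z := by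
  simp only [cosh_add, sinh_add]
  linear_combination (cosh y * cosh z - sinh y * sinh z) * cosh_sq_sub_sinh_sq x

lemma abs_sinh_le_sinh {y B : ℝ} (hy : |y| ≤ B) : |sinh y| ≤ sinh B := by
  rw [abs_sinh]
  exact sinh_le_sinh.2 hy

lemma sinh_sub_le_sinh_add {x y B : ℝ} (hy : |y| ≤ B) : sinh (x - B) ≤ sinh (x + y) :=
  sinh_le_sinh.2 (by linarith [neg_abs_le y])

lemma tendsto_sinh_atTop : Tendsto sinh atTop atTop :=
  tendsto_atTop_mono' atTop ((eventually_ge_atTop 0).mono fun _ hx ↦ self_le_sinh_iff.2 hx)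
    tendsto_id

end Real

lemma hypPackAngle_eq_arccos {x y z : ℝ} (hy : sinh (x + y) ≠ 0) (hz : sinh (x + z) ≠ 0) :
    hypPackAngle x y z = arccos (1 - 2 * sinh y * sinh z / (sinh (x + y) * sinh (x + z))) := by
  rw [hypPackAngle, cosh_add_mul_cosh_add_sub_cosh_add, sub_div, div_self (mul_ne_zero hy hz)]

lemma hypPackAngle_le_arccos {x y z B : ℝ} (hy : |y| ≤ B) (hz : |z| ≤ B) (hx : B < x) :
    hypPackAngle x y z ≤ arccos (1 - 2 * sinh B ^ 2 / sinh (x - B) ^ 2) := by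
  have hxB : 0 < sinh (x - B) := sinh_pos_iff.2 (sub_pos.2 hx)
  have hxy : sinh (x - B) ≤ sinh (x + y) := sinh_sub_le_sinh_add hy
  have hxz : sinh (x - B) ≤ sinh (x + z) := sinh_sub_le_sinh_add hz
  rw [hypPackAngle_eq_arccos (hxB.trans_le hxy).ne' (hxB.trans_le hxz).ne']
  refine arccos_le_arccos (sub_le_sub_left ?_ 1)
  calc 2 * sinh y * sinh z / (sinh (x + y) * sinh (x + z))
      ≤ |2 * sinh y * sinh z / (sinh (x + y) * sinh (x + z))| := le_abs_self _
    _ = 2 * (|sinh y| * |sinh z|) / (sinh (x + y) * sinh (x + z)) := by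
      rw [abs_div, abs_mul, abs_mul, abs_two, mul_assoc,
        abs_of_pos (mul_pos (hxB.trans_le hxy) (hxB.trans_le hxz))]
    _ ≤ 2 * (sinh B * sinh B) / (sinh (x - B) * sinh (x - B)) := by
      have hyB := abs_sinh_le_sinh hy
      have hzB := abs_sinh_le_sinh hz
      have hB : 0 ≤ sinh B := (abs_nonneg _).trans hyB
      have hxy₀ : 0 ≤ sinh (x + y) := hxB.le.trans hxy
      gcongr
    _ = 2 * sinh B ^ 2 / sinh (x - B) ^ 2 := by ring

lemma tendsto_arccos_one_sub_sinh_sq_div (B : ℝ) :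
    Tendsto (fun x ↦ arccos (1 - 2 * sinh B ^ 2 / sinh (x - B) ^ 2)) atTop (𝓝 0) := by
  have hsinh : Tendsto (fun x ↦ sinh (x - B) ^ 2) atTop atTop :=
    (tendsto_pow_atTop two_ne_zero).comp
      (tendsto_sinh_atTop.comp (tendsto_atTop_add_const_right _ _ tendsto_id))
  have hquot := (tendsto_const_nhds (x := 2 * sinh B ^ 2)).div_atTop hsinh
  simpa only [sub_zero, arccos_one] using (hquot.const_sub 1).arccos

theorem hyp_pack_angle_tendsto_zero (K : Set ℝ) (hK : IsCompact K) :
    ∀ ε > 0, ∃ M : ℝ, ∀ r1 ≥ M, ∀ r2 ∈ K, ∀ r3 ∈ K, hypPackAngle r1 r2 r3 < ε := by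
  intro ε hε
  obtain ⟨B, hB⟩ := hK.isBounded.exists_norm_le
  obtain ⟨M, hM⟩ := eventually_atTop.1
    ((tendsto_order.1 (tendsto_arccos_one_sub_sinh_sq_div B)).2 ε hε)
  refine ⟨max M (B + 1), fun r1 hr1 r2 hr2 r3 hr3 ↦ ?_⟩
  calc hypPackAngle r1 r2 r3 ≤ arccos (1 - 2 * sinh B ^ 2 / sinh (r1 - B) ^ 2) :=
        hypPackAngle_le_arccos (hB r2 hr2) (hB r3 hr3) (by linarith [le_max_right M (B + 1)])
    _ < ε := hM r1 (le_of_max_le_left hr1)
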